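/- Let C ⊂ P^{d−1} be a nondegenerate curve of degree d whose saturated ideal I_C is generated by quadrics (property C_2). Let S = ⟨p, C⟩ ⊂ P^d be the cone over C with vertex p. Then any line l through p not contained in S meets S in a scheme of length at most 2; i.e., l is at most a bisecant line to S. -/

import Mathlib

open MvPolynomial

/-- Hilbert function of the homogeneous ideal `I`: dimension of the degree-`k` piece of
the homogeneous coordinate ring. -/
noncomputable def hilbertFn {σ : Type} (I : Ideal (MvPolynomial σ ℂ)) (k : ℕ) : ℕ :=
  Module.finrank ℂ
    ((MvPolynomial.homogeneousSubmodule σ ℂ k) ⧸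
      (Submodule.comap (MvPolynomial.homogeneousSubmodule σ ℂ k).subtype
        (Submodule.restrictScalars ℂ I)))

/-- Restriction of a polynomial to the line through `[u]` and `[v]` in projective space,
written as a binary form in two new variables. -/
noncomputable def lineRestrict {σ : Type} (u v : σ → ℂ) :
    MvPolynomial σ ℂ →ₐ[ℂ] MvPolynomial (Fin 2) ℂ :=
  MvPolynomial.aeval fun i =>
    MvPolynomial.C (u i) * MvPolynomial.X 0 + MvPolynomial.C (v i) * MvPolynomial.X 1

/-!
Each `f ∈ F` is a quadric in the first `d` coordinates, so on the line `s • (x, 0) + t • p`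
the corresponding generator of the cone restricts to `f(x) s²`. Some `f ∈ F` has `f(x) ≠ 0`,
so the restricted ideal contains `s²`, and modulo `s²` every binary form of degree `n ≥ 1` is
a combination of `t ^ n` and `s t ^ (n - 1)`.
-/

theorem MvPolynomial.IsHomogeneous.aeval_algebraMap_mul {R A σ : Type*} [CommSemiring R]
    [CommSemiring A] [Algebra R A] {f : MvPolynomial σ R} {n : ℕ} (hf : f.IsHomogeneous n)
    (x : σ → R) (a : A) :
    MvPolynomial.aeval (fun j => algebraMap R A (x j) * a) f =
      algebraMap R A (eval x f) * a ^ n := by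
  conv_lhs => rw [f.as_sum]
  conv_rhs => rw [f.as_sum]
  simp only [map_sum, Finset.sum_mul]
  refine Finset.sum_congr rfl fun m hm => ?_
  have hdeg : ∑ i ∈ m.support, m i = n := by
    rw [← Finsupp.degree_apply, Finsupp.degree_eq_weight_one]
    exact hf (mem_support_iff.mp hm)
  rw [aeval_monomial, eval_monomial]
  simp only [Finsupp.prod, mul_pow, Finset.prod_mul_distrib, Finset.prod_pow_eq_pow_sum, hdeg,
    map_mul, map_prod, map_pow]
  ring

theorem Submodule.finrank_quotient_comap_subtype_le {K M : Type*} [Ring K]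
    [StrongRankCondition K] [AddCommGroup M] [Module K M] {V J : Submodule K M} {k : ℕ}
    (e : Fin k → M) (he : ∀ i, e i ∈ V) (hV : V ≤ span K (Set.range e) ⊔ J) :
    Module.finrank K (V ⧸ J.comap V.subtype) ≤ k := by
  let q : Fin k → V ⧸ J.comap V.subtype := fun i => Quotient.mk ⟨e i, he i⟩
  suffices span K (Set.range q) = ⊤ by simpa using finrank_le_of_span_eq_top this
  refine eq_top_iff.mpr fun w _ => ?_
  obtain ⟨v, rfl⟩ := Quotient.mk_surjective _ w
  obtain ⟨a, ha, b, hb, hab⟩ := mem_sup.mp (hV v.2)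
  obtain ⟨c, rfl⟩ := (mem_span_range_iff_exists_fun K).mp ha
  have hv : Quotient.mk v = ∑ i, c i • q i := by
    rw [show ∑ i, c i • q i = (J.comap V.subtype).mkQ (∑ i, c i • ⟨e i, he i⟩) by
      simp only [q, map_sum, map_smul, mkQ_apply]]
    refine (Quotient.eq _).mpr ?_
    simpa [← hab] using hb
  rw [hv]
  exact sum_mem fun i _ => smul_mem _ _ (subset_span ⟨i, rfl⟩)

theorem MvPolynomial.homogeneousSubmodule_fin_two_le_span_sup {R : Type*} [CommSemiring R]
    {J : Ideal (MvPolynomial (Fin 2) R)} (hJ : X 0 ^ 2 ∈ J) (n : ℕ) :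
    homogeneousSubmodule (Fin 2) R n ≤
      Submodule.span R (Set.range fun i : Fin 2 =>
        monomial (Finsupp.single 0 (i : ℕ) + Finsupp.single 1 (n - i)) (1 : R)) ⊔
      J.restrictScalars R := by
  intro p hp
  rw [p.as_sum]
  refine Submodule.sum_mem _ fun m hm => ?_
  have hdeg : m 0 + m 1 = n := by
    have := (mem_homogeneousSubmodule _ _).mp hp (mem_support_iff.mp hm)
    simpa [Finsupp.weight_apply, Finsupp.sum_fintype, Fin.sum_univ_two] using this
  by_cases h2 : 2 ≤ m 0
  · refine Submodule.mem_sup_right ?_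
    have : monomial m (coeff m p) = monomial (m - Finsupp.single 0 2) (coeff m p) * X 0 ^ 2 := by
      rw [X_pow_eq_monomial, monomial_mul, mul_one,
        tsub_add_cancel_of_le (Finsupp.single_le_iff.mpr h2)]
    exact this ▸ J.mul_mem_left _ hJ
  · refine Submodule.mem_sup_left ?_
    have hm : m = Finsupp.single 0 (m 0) + Finsupp.single 1 (n - m 0) := by
      ext i; fin_cases i <;> simp; omega
    have : monomial m (coeff m p) = coeff m p •
        monomial (Finsupp.single 0 (m 0) + Finsupp.single 1 (n - m 0)) (1 : R) := by
      rw [smul_monomial, smul_eq_mul, mul_one, ← hm]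
    exact this ▸ Submodule.smul_mem _ _ (Submodule.subset_span ⟨⟨m 0, by omega⟩, rfl⟩)

theorem hilbertFn_le_two_of_X_sq_mem {J : Ideal (MvPolynomial (Fin 2) ℂ)} (hJ : X 0 ^ 2 ∈ J)
    {n : ℕ} (hn : 1 ≤ n) : hilbertFn J n ≤ 2 := by
  refine Submodule.finrank_quotient_comap_subtype_le _ (fun i => ?_)
    (homogeneousSubmodule_fin_two_le_span_sup hJ n)
  refine (mem_homogeneousSubmodule _ _).mpr (isHomogeneous_monomial _ ?_)
  rw [map_add, Finsupp.degree_single, Finsupp.degree_single]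
  omega

theorem lineRestrict_snoc_single_rename_castSucc {d n : ℕ} {f : MvPolynomial (Fin d) ℂ}
    (hf : f.IsHomogeneous n) (x : Fin d → ℂ) (c b : ℂ) :
    lineRestrict (Fin.snoc x c) (Pi.single (Fin.last d) b) (rename Fin.castSucc f) =
      C (eval x f) * X 0 ^ n := by
  have hline : (fun i => C ((Fin.snoc x c : Fin (d + 1) → ℂ) i) * X 0 +
      C ((Pi.single (Fin.last d) b : Fin (d + 1) → ℂ) i) * X 1) ∘ Fin.castSucc =
      fun j => algebraMap ℂ (MvPolynomial (Fin 2) ℂ) (x j) * X 0 := by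
    funext j
    simp
  rw [lineRestrict, aeval_rename, hline, hf.aeval_algebraMap_mul, algebraMap_eq]

theorem stmt_4_general (d : ℕ) (F : Set (MvPolynomial (Fin d) ℂ))
    (hquad : ∀ f ∈ F, f.IsHomogeneous 2)
    (x : Fin d → ℂ)
    (hx : ∃ f ∈ F, MvPolynomial.eval x f ≠ 0)
    (L : ℕ)
    (hL : ∀ᶠ n in Filter.atTop,
      hilbertFn (Ideal.span (lineRestrict (Fin.snoc x 0) (Pi.single (Fin.last d) 1) ''
        ((fun f => MvPolynomial.rename Fin.castSucc f) '' F))) n = L) :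
    L ≤ 2 := by
  obtain ⟨f, hfF, hfx⟩ := hx
  set J := Ideal.span (lineRestrict (Fin.snoc x 0) (Pi.single (Fin.last d) 1) ''
    ((fun f => MvPolynomial.rename Fin.castSucc f) '' F))
  have hfJ : C (eval x f) * X 0 ^ 2 ∈ J := by
    rw [← lineRestrict_snoc_single_rename_castSucc (hquad f hfF)]
    exact Ideal.subset_span ⟨_, ⟨f, hfF, rfl⟩, rfl⟩
  have hX : (X 0 : MvPolynomial (Fin 2) ℂ) ^ 2 ∈ J := by
    simpa [← mul_assoc, ← map_mul, hfx] using J.mul_mem_left (C (eval x f)⁻¹) hfJ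
  obtain ⟨n, hn, hn1⟩ := (hL.and (Filter.eventually_ge_atTop 1)).exists
  exact hn ▸ hilbertFn_le_two_of_X_sq_mem hX hn1

/-- Let `C ⊂ P^{d-1}` be a nondegenerate curve whose saturated ideal is generated by the
quadrics `F`, and let `S ⊂ P^d` be the cone over `C` with vertex `p = (0:⋯:0:1)` (ideal
generated by `F` in one more variable). Any line through `p` and a point `(x:0) ∉ S`
meets `S` in a scheme of length `L ≤ 2` (length = eventual Hilbert function of the
restriction of the cone ideal to the line). -/
theorem stmt_4 (d : ℕ) (hd : 3 ≤ d) (F : Set (MvPolynomial (Fin d) ℂ))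
    (hquad : ∀ f ∈ F, f.IsHomogeneous 2)
    (hnd : ∀ f ∈ Ideal.span F, f.IsHomogeneous 1 → f = 0)
    (x : Fin d → ℂ)
    (hx : ∃ f ∈ F, MvPolynomial.eval x f ≠ 0)
    (L : ℕ)
    (hL : ∀ᶠ n in Filter.atTop,
      hilbertFn (Ideal.span (lineRestrict (Fin.snoc x 0) (Pi.single (Fin.last d) 1) ''
        ((fun f => MvPolynomial.rename Fin.castSucc f) '' F))) n = L) :
    L ≤ 2 :=
  stmt_4_general d F hquad x hx L hL
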